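/- Let X = {x_0,...,x_m}. The set of purely improper tuples in ℝ^m⟨⟨X⟩⟩ forms a group under the multiplicative composition product ⋆ with identity 1l = (𝟙,...,𝟙): ⋆ maps purely improper pairs to purely improper tuples, and every purely improper d has a unique two-sided ⋆-inverse d^{⋆-1}; moreover d^{⋆-1} is the unique solution e of the fixed point equation e = d^{⧢-1} ⟲ e. -/

import Mathlib

open scoped BigOperators

namespace CFS

noncomputable section

/-- The alphabet `X = {x_0, x_1, ..., x_m}`: `none` encodes `x_0`, `some i` encodes `x_{i+1}`. -/
abbrev Letter (m : ℕ) := Option (Fin m)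

/-- Words over the alphabet `X`. -/
abbrev Word (m : ℕ) := List (Letter m)

/-- Formal power series `ℝ⟨⟨X⟩⟩`: coefficient functions on words. -/
abbrev FPS (m : ℕ) := Word m → ℝ

/-- Tuples of series `ℝ^ℓ⟨⟨X⟩⟩`. -/
abbrev FPST (m ℓ : ℕ) := Fin ℓ → FPS m

/-- The series `𝟙` (coefficient 1 at the empty word). -/
def unit (m : ℕ) : FPS m := fun w => if w = [] then 1 else 0

/-- The tuple `1l = (𝟙,...,𝟙)`. -/
def unitT (m ℓ : ℕ) : FPST m ℓ := fun _ => unit m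

/-- Left concatenation of a series by the letter `x`. -/
def lc {m : ℕ} (x : Letter m) (c : FPS m) : FPS m :=
  fun w => match w with
  | [] => 0
  | y :: u => if y = x then c u else 0

/-- The shuffle product `c ⧢ d`, given by the coefficientwise recursion dual to the
word recursion `(x u) ⧢ (y v) = x(u ⧢ (y v)) + y((x u) ⧢ v)`, `𝟙 ⧢ η = η ⧢ 𝟙 = η`:
left shifts act as derivations. -/
def sh {m : ℕ} : FPS m → FPS m → FPS m
  | c, d, [] => c [] * d []
  | c, d, x :: w => sh (fun u => c (x :: u)) d w + sh c (fun u => d (x :: u)) w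

/-- Componentwise shuffle on tuples. -/
def shT {m ℓ : ℕ} (c d : FPST m ℓ) : FPST m ℓ := fun i => sh (c i) (d i)

/-- A tuple is purely improper when each component has a nonzero constant coefficient. -/
def PurelyImproper {m ℓ : ℕ} (c : FPST m ℓ) : Prop := ∀ i, c i [] ≠ 0

/-- `η ⟲ d` on a word `η`. -/
def wmc {m : ℕ} (d : FPST m m) : Word m → FPS m
  | [] => unit m
  | none :: η => lc none (wmc d η)
  | some i :: η => lc (some i) (sh (d i) (wmc d η))

/-- Multiplicative mixed composition product `c ⟲ d := Σ_η c(η)(η ⟲ d)`.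
Since `η ⟲ d` is supported on words of length `≥ |η|`, only words `η` of length
`≤ |w|` contribute to the coefficient at `w`. -/
def mc {m : ℕ} (c : FPS m) (d : FPST m m) : FPS m :=
  fun w => ∑ k ∈ Finset.range (w.length + 1),
    ∑ η : Fin k → Letter m, c (List.ofFn η) * wmc d (List.ofFn η) w

/-- `⟲` on tuples (componentwise in the left argument). -/
def mcT {m ℓ : ℕ} (c : FPST m ℓ) (d : FPST m m) : FPST m ℓ := fun i => mc (c i) d

/-- `ψ_d(η)(𝟙)`, where `ψ_d(x'_0)(e) = x_0(𝟙 ⧢ e)` and `ψ_d(x'_i)(e) = x_0(d_i ⧢ e)`. -/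
def wcomp {m ℓ : ℕ} (d : FPST m ℓ) : Word ℓ → FPS m
  | [] => unit m
  | none :: η => lc none (sh (unit m) (wcomp d η))
  | some i :: η => lc none (sh (d i) (wcomp d η))

/-- Composition product `c ∘ d := Σ_η c(η) ψ_d(η)(𝟙)`; since `ψ_d(η)(𝟙)` is supported
on words of length `≥ |η|`, only `η` with `|η| ≤ |w|` contribute at `w`. -/
def comp {m ℓ : ℕ} (c : FPS ℓ) (d : FPST m ℓ) : FPS m :=
  fun w => ∑ k ∈ Finset.range (w.length + 1),
    ∑ η : Fin k → Letter ℓ, c (List.ofFn η) * wcomp d (List.ofFn η) w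

/-- `∘` componentwise in the left argument. -/
def compT {m ℓ q : ℕ} (c : FPST ℓ q) (d : FPST m ℓ) : FPST m q := fun i => comp (c i) d

/-- Multiplicative composition product `c ⋆ d := d ⧢ (c ⟲ d)`. -/
def star {m : ℕ} (c d : FPST m m) : FPST m m := fun i => sh (d i) (mc (c i) d)

/-- Iteration of `e ↦ c(𝟙)⁻¹ ⬝ (𝟙 − c' ⧢ e)` (with `c'` the proper part of `c`),
whose fixed point is the shuffle inverse of `c` when `c(𝟙) ≠ 0`. -/
def shInvAux {m : ℕ} (c : FPS m) : ℕ → FPS m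
  | 0 => fun _ => 0
  | n + 1 => fun w =>
      (c [])⁻¹ * (unit m w - sh (fun u => if u = [] then 0 else c u) (shInvAux c n) w)

/-- Shuffle inverse `c^{⧢-1}` (the coefficient at `w` stabilizes after `|w|+1` iterations). -/
def shInv {m : ℕ} (c : FPS m) : FPS m := fun w => shInvAux c (w.length + 1) w

/-- Componentwise shuffle inverse of a tuple. -/
def shInvT {m ℓ : ℕ} (c : FPST m ℓ) : FPST m ℓ := fun i => shInv (c i)

/-- Iteration of the strong contraction `e ↦ d^{⧢-1} ⟲ e`, whose fixed point is `d^{⋆-1}`. -/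
def starInvAux {m : ℕ} (d : FPST m m) : ℕ → FPST m m
  | 0 => fun _ _ => 0
  | n + 1 => mcT (shInvT d) (starInvAux d n)

/-- `⋆`-inverse `d^{⋆-1}` of a purely improper tuple. -/
def starInv {m : ℕ} (d : FPST m m) : FPST m m := fun i w => starInvAux d (w.length + 1) i w

/-- Multiplicative dynamic feedback product `c @̌ d := c ⟲ (d^{⧢-1} ∘ c)^{⋆-1}`. -/
def fb {m q : ℕ} (c : FPST m q) (d : FPST q m) : FPST m q :=
  mcT c (starInv (compT (shInvT d) c))

/-- Valuation: minimal length of a word in the support (`⊤` for the zero series). -/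
def val {m : ℕ} (c : FPS m) : ℕ∞ :=
  sInf ((fun w : Word m => (w.length : ℕ∞)) '' {w | c w ≠ 0})

/-- Valuation of a tuple: minimum over components. -/
def valT {m ℓ : ℕ} (c : FPST m ℓ) : ℕ∞ := ⨅ i, val (c i)

/-- `σ^v` for `v : ℕ∞`, with `σ^∞ = 0`; so `κ(a,b) = enpow σ (val (a-b))`. -/
def enpow (σ : ℝ) (v : ℕ∞) : ℝ := if v = ⊤ then 0 else σ ^ v.toNat

/-- The natural part `c_N`: restriction of `c` to words in the letter `x_0` only. -/
def natPart {m : ℕ} (c : FPS m) : FPS m :=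
  fun w => if ∀ x ∈ w, x = (none : Letter m) then c w else 0

/-- The forced part `c_F := c − c_N`. -/
def forcedPart {m : ℕ} (c : FPS m) : FPS m := fun w => c w - natPart c w

/-- `c` has (finite) class `r ≥ 1`: `supp(c_F) ⊆ x_0^{r-1}X^+` and `supp(c_F) ⊄ x_0^r X^+`. -/
def hasClassF {m : ℕ} (c : FPS m) (r : ℕ) : Prop :=
  1 ≤ r ∧
  (∀ w, forcedPart c w ≠ 0 → ∃ v, v ≠ [] ∧ w = List.replicate (r - 1) (none : Letter m) ++ v) ∧
  ¬ (∀ w, forcedPart c w ≠ 0 → ∃ v, v ≠ [] ∧ w = List.replicate r (none : Letter m) ++ v)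

/-- `𝒞(c) = r` for `r : ℕ∞`, with `𝒞(c) = ∞` iff `c_F = 0`. -/
def hasClass {m : ℕ} (c : FPS m) (r : ℕ∞) : Prop :=
  (r = ⊤ ∧ forcedPart c = fun _ => 0) ∨ ∃ n : ℕ, r = (n : ℕ∞) ∧ hasClassF c n

/-- `c` has relative degree `r`: `𝒞(c) = r` and `x_0^{r-1} x_1 ∈ supp(c_F)`. -/
def hasRelDeg (c : FPS 1) (r : ℕ) : Prop :=
  hasClassF c r ∧
  forcedPart c (List.replicate (r - 1) (none : Letter 1) ++ [some 0]) ≠ 0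

/-- `⟲` for single (SISO, `m = 1`) series. -/
def mc1 (c d : FPS 1) : FPS 1 := mc c (fun _ => d)

/-- The multiplicative dynamic feedback product for single (SISO) series. -/
def fb1 (c d : FPS 1) : FPS 1 :=
  mc c (starInv (compT (fun _ : Fin 1 => shInv d) (fun _ : Fin 1 => c)))

end

end CFS

namespace CFS

variable {m : ℕ}

/-! ### Basic unfolding lemmas -/

lemma sh_nil (c d : FPS m) : sh c d [] = c [] * d [] := rfl

lemma sh_cons (c d : FPS m) (x : Letter m) (w : Word m) :
    sh c d (x :: w) = sh (fun u => c (x :: u)) d w + sh c (fun u => d (x :: u)) w := rfl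

lemma lc_nil (x : Letter m) (c : FPS m) : lc x c [] = 0 := rfl

lemma lc_cons (x : Letter m) (c : FPS m) (y : Letter m) (u : Word m) :
    lc x c (y :: u) = if y = x then c u else 0 := rfl

lemma wmc_nil (d : FPST m m) : wmc d [] = unit m := rfl

lemma wmc_cons_none (d : FPST m m) (η : Word m) :
    wmc d (none :: η) = lc none (wmc d η) := rfl

lemma wmc_cons_some (d : FPST m m) (i : Fin m) (η : Word m) :
    wmc d (some i :: η) = lc (some i) (sh (d i) (wmc d η)) := rfl

lemma mc_apply (c : FPS m) (d : FPST m m) (w : Word m) :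
    mc c d w = ∑ k ∈ Finset.range (w.length + 1),
      ∑ η : Fin k → Letter m, c (List.ofFn η) * wmc d (List.ofFn η) w := rfl

/-! ### Shuffle: algebraic properties -/

lemma sh_add_left : ∀ (w : Word m) (a b c : FPS m),
    sh (fun u => a u + b u) c w = sh a c w + sh b c w
  | [], a, b, c => by simp [sh_nil, add_mul]
  | x :: w, a, b, c => by
    simp only [sh_cons]
    rw [sh_add_left w, sh_add_left w]
    ring

lemma sh_smul_left : ∀ (w : Word m) (r : ℝ) (a c : FPS m),
    sh (fun u => r * a u) c w = r * sh a c w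
  | [], r, a, c => by simp [sh_nil]; ring
  | x :: w, r, a, c => by
    simp only [sh_cons]
    rw [sh_smul_left w, sh_smul_left w]
    ring

lemma sh_zero_left (w : Word m) (c : FPS m) : sh (fun _ => 0) c w = 0 := by
  have := sh_smul_left w 0 (fun _ => (0:ℝ)) c
  simpa using this

lemma sh_comm : ∀ (w : Word m) (a b : FPS m), sh a b w = sh b a w
  | [], a, b => by rw [sh_nil, sh_nil, mul_comm]
  | x :: w, a, b => by
    rw [sh_cons, sh_cons, sh_comm w (fun u => a (x :: u)) b,
      sh_comm w a (fun u => b (x :: u)), add_comm]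

lemma sh_add_right (w : Word m) (a b c : FPS m) :
    sh a (fun u => b u + c u) w = sh a b w + sh a c w := by
  rw [sh_comm w a, sh_add_left, sh_comm w b, sh_comm w c]

lemma sh_smul_right (w : Word m) (r : ℝ) (a c : FPS m) :
    sh a (fun u => r * c u) w = r * sh a c w := by
  rw [sh_comm w a, sh_smul_left, sh_comm w c]

lemma sh_zero_right (w : Word m) (c : FPS m) : sh c (fun _ => 0) w = 0 := by
  rw [sh_comm, sh_zero_left]

lemma sh_sum_right {ι : Type*} (s : Finset ι) (f : ι → FPS m) (c : FPS m) (w : Word m) :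
    sh c (fun u => ∑ j ∈ s, f j u) w = ∑ j ∈ s, sh c (f j) w := by
  classical
  induction s using Finset.induction_on with
  | empty => simpa using sh_zero_right w c
  | insert _ _ hnotmem ih =>
    rename_i a s
    simp only [Finset.sum_insert hnotmem]
    rw [← ih, ← sh_add_right]

lemma sh_unit_left : ∀ (w : Word m) (c : FPS m), sh (unit m) c w = c w
  | [], c => by simp [sh_nil, unit]
  | x :: w, c => by
    rw [sh_cons]
    have h1 : (fun u => unit m (x :: u)) = (fun _ : Word m => (0:ℝ)) := by
      funext u; simp [unit]
    rw [h1, sh_zero_left, zero_add, sh_unit_left w]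

lemma sh_unit_right (w : Word m) (c : FPS m) : sh c (unit m) w = c w := by
  rw [sh_comm, sh_unit_left]

lemma sh_assoc : ∀ (w : Word m) (a b c : FPS m), sh (sh a b) c w = sh a (sh b c) w
  | [], a, b, c => by simp [sh_nil, mul_assoc]
  | x :: w, a, b, c => by
    rw [sh_cons, sh_cons]
    have h1 : (fun u => sh a b (x :: u)) =
        fun u => sh (fun v => a (x :: v)) b u + sh a (fun v => b (x :: v)) u := by
      funext u; rw [sh_cons]
    have h2 : (fun u => sh b c (x :: u)) =
        fun u => sh (fun v => b (x :: v)) c u + sh b (fun v => c (x :: v)) u := by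
      funext u; rw [sh_cons]
    rw [h1, h2, sh_add_left, sh_add_right, sh_assoc w, sh_assoc w, sh_assoc w]
    ring

lemma sh_left_comm (w : Word m) (a b c : FPS m) :
    sh a (sh b c) w = sh b (sh a c) w := by
  have hab : sh a b = sh b a := funext fun u => sh_comm u a b
  rw [← sh_assoc, hab, sh_assoc]

/-- `sh a f w` only depends on `f` at words `u` with `|u| + k ≤ |w|` whenever `a`
vanishes on words of length `< k`. -/
lemma sh_congr : ∀ (w : Word m) (k : ℕ) (a f g : FPS m),
    (∀ u : Word m, u.length < k → a u = 0) →
    (∀ u : Word m, u.length + k ≤ w.length → f u = g u) →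
    sh a f w = sh a g w
  | [], k, a, f, g, ha, hf => by
    rcases Nat.eq_zero_or_pos k with hk | hk
    · subst hk
      rw [sh_nil, sh_nil, hf [] (by simp)]
    · rw [sh_nil, sh_nil, ha [] (by simpa using hk), zero_mul, zero_mul]
  | x :: w, k, a, f, g, ha, hf => by
    rw [sh_cons, sh_cons]
    have t1 : sh (fun u => a (x :: u)) f w = sh (fun u => a (x :: u)) g w := by
      apply sh_congr w (k - 1)
      · intro u hu
        exact ha (x :: u) (by simp only [List.length_cons]; omega)
      · intro u hu
        apply hf u
        simp only [List.length_cons]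
        omega
    have t2 : sh a (fun u => f (x :: u)) w = sh a (fun u => g (x :: u)) w := by
      apply sh_congr w k a
      · exact ha
      · intro u hu
        apply hf (x :: u)
        simp only [List.length_cons]
        omega
    rw [t1, t2]

lemma sh_congr_right (w : Word m) (a f g : FPS m)
    (h : ∀ u : Word m, u.length ≤ w.length → f u = g u) : sh a f w = sh a g w :=
  sh_congr w 0 a f g (by intro u hu; omega) (fun u hu => h u (by omega))

lemma sh_congr_left (w : Word m) (a a' f : FPS m)
    (h : ∀ u : Word m, u.length ≤ w.length → a u = a' u) : sh a f w = sh a' f w := by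
  rw [sh_comm, sh_congr_right w f a a' h, sh_comm]

lemma sh_vanish : ∀ (w : Word m) (n : ℕ) (f g : FPS m),
    (∀ v : Word m, v.length < n → g v = 0) → w.length < n → sh f g w = 0
  | [], n, f, g, hg, hw => by
    rw [sh_nil, hg [] (by simpa using hw), mul_zero]
  | x :: w, n, f, g, hg, hw => by
    rw [sh_cons]
    have h1 : sh (fun u => f (x :: u)) g w = 0 :=
      sh_vanish w n _ g hg (by simp at hw; omega)
    have h2 : sh f (fun u => g (x :: u)) w = 0 := by
      apply sh_vanish w (n - 1) f
      · intro v hv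
        exact hg (x :: v) (by simp only [List.length_cons]; omega)
      · simp only [List.length_cons] at hw; omega
    rw [h1, h2, add_zero]

/-! ### Mixed composition: recursion lemmas -/

lemma wmc_vanish (d : FPST m m) : ∀ (η : Word m) (w : Word m),
    w.length < η.length → wmc d η w = 0
  | [], w, h => by simp at h
  | none :: η, [], h => rfl
  | none :: η, y :: u, h => by
    rw [wmc_cons_none, lc_cons]
    split
    · exact wmc_vanish d η u (by simp only [List.length_cons] at h; omega)
    · rfl
  | some i :: η, [], h => rfl
  | some i :: η, y :: u, h => by
    rw [wmc_cons_some, lc_cons]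
    split
    · apply sh_vanish u η.length (d i) _ (fun v hv => wmc_vanish d η v hv)
      simp only [List.length_cons] at h; omega
    · rfl

lemma mc_eq_sum (c : FPS m) (d : FPST m m) {w : Word m} {N : ℕ} (h : w.length ≤ N) :
    mc c d w = ∑ k ∈ Finset.range (N + 1),
      ∑ η : Fin k → Letter m, c (List.ofFn η) * wmc d (List.ofFn η) w := by
  rw [mc_apply]
  apply Finset.sum_subset (Finset.range_subset_range.mpr (by omega))
  intro k hk hknot
  apply Finset.sum_eq_zero
  intro η _
  have hlt : w.length < (List.ofFn η).length := by
    simp only [List.length_ofFn]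
    simp only [Finset.mem_range] at hknot
    omega
  rw [wmc_vanish d (List.ofFn η) w hlt, mul_zero]

lemma mc_nil (c : FPS m) (d : FPST m m) : mc c d [] = c [] := by
  rw [mc_apply]
  simp [wmc_nil, unit, List.ofFn_zero]

lemma wmc_head_ne (d : FPST m m) (x y : Letter m) (ρ w : Word m) (h : y ≠ x) :
    wmc d (x :: ρ) (y :: w) = 0 := by
  cases x with
  | none => rw [wmc_cons_none, lc_cons, if_neg h]
  | some i => rw [wmc_cons_some, lc_cons, if_neg h]

lemma mc_cons (c : FPS m) (d : FPST m m) (y : Letter m) (w : Word m) :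
    mc c d (y :: w) = ∑ k ∈ Finset.range (w.length + 1),
      ∑ η : Fin k → Letter m,
        c (y :: List.ofFn η) * wmc d (y :: List.ofFn η) (y :: w) := by
  rw [mc_apply]
  simp only [List.length_cons]
  rw [Finset.sum_range_succ']
  have h0 : (∑ η : Fin 0 → Letter m, c (List.ofFn η) * wmc d (List.ofFn η) (y :: w)) = 0 := by
    simp [List.ofFn_zero, wmc_nil, unit]
  rw [h0, add_zero]
  refine Finset.sum_congr rfl fun k _ => ?_
  have e1 : ∑ η : Fin (k + 1) → Letter m, c (List.ofFn η) * wmc d (List.ofFn η) (y :: w)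
      = ∑ p : Letter m × (Fin k → Letter m),
          c (List.ofFn (Fin.cons p.1 p.2)) * wmc d (List.ofFn (Fin.cons p.1 p.2)) (y :: w) := by
    rw [← Equiv.sum_comp (Fin.consEquiv (fun _ => Letter m))
      (fun η => c (List.ofFn η) * wmc d (List.ofFn η) (y :: w))]
    rfl
  rw [e1, Fintype.sum_prod_type]
  rw [Fintype.sum_eq_single y]
  · refine Finset.sum_congr rfl fun η _ => ?_
    rw [show List.ofFn (Fin.cons y η) = y :: List.ofFn η by
      simp [List.ofFn_succ, Fin.cons_zero, Fin.cons_succ]]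
  · intro x hx
    apply Finset.sum_eq_zero
    intro η _
    rw [show List.ofFn (Fin.cons x η) = x :: List.ofFn η by
      simp [List.ofFn_succ, Fin.cons_zero, Fin.cons_succ]]
    rw [wmc_head_ne d x y _ w (Ne.symm hx), mul_zero]

lemma mc_cons_none (c : FPS m) (d : FPST m m) (w : Word m) :
    mc c d (none :: w) = mc (fun u => c (none :: u)) d w := by
  rw [mc_cons, mc_apply]
  refine Finset.sum_congr rfl fun k _ => Finset.sum_congr rfl fun η _ => ?_
  rw [wmc_cons_none, lc_cons, if_pos rfl]

lemma mc_cons_some (c : FPS m) (d : FPST m m) (i : Fin m) (w : Word m) :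
    mc c d (some i :: w) = sh (d i) (mc (fun u => c (some i :: u)) d) w := by
  rw [mc_cons]
  have h2 : sh (d i) (mc (fun u => c (some i :: u)) d) w
      = sh (d i) (fun u => ∑ k ∈ Finset.range (w.length + 1),
          ∑ η : Fin k → Letter m,
            c (some i :: List.ofFn η) * wmc d (List.ofFn η) u) w := by
    apply sh_congr_right
    intro u hu
    exact mc_eq_sum _ _ (by omega)
  rw [h2, sh_sum_right]
  refine Finset.sum_congr rfl fun k _ => ?_
  rw [sh_sum_right]
  refine Finset.sum_congr rfl fun η _ => ?_
  rw [sh_smul_right]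
  congr 1
  rw [wmc_cons_some, lc_cons, if_pos rfl]

/-! ### Mixed composition: algebraic properties -/

lemma mc_add_left (a b : FPS m) (d : FPST m m) (w : Word m) :
    mc (fun u => a u + b u) d w = mc a d w + mc b d w := by
  simp only [mc_apply, add_mul, Finset.sum_add_distrib]

lemma mc_zero_left (d : FPST m m) (w : Word m) : mc (fun _ => 0) d w = 0 := by
  simp [mc_apply]

lemma mc_unitT : ∀ (w : Word m) (c : FPS m), mc c (unitT m m) w = c w
  | [], c => mc_nil c _
  | none :: w, c => by rw [mc_cons_none, mc_unitT w]
  | some i :: w, c => by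
    rw [mc_cons_some]
    have : unitT m m i = unit m := rfl
    rw [this, sh_unit_left, mc_unitT w]

lemma mc_unit_left : ∀ (w : Word m) (d : FPST m m), mc (unit m) d w = unit m w
  | [], d => by rw [mc_nil]
  | none :: w, d => by
    rw [mc_cons_none]
    have h1 : (fun u => unit m (none :: u)) = (fun _ : Word m => (0:ℝ)) := by
      funext u; simp [unit]
    rw [h1, mc_zero_left]
    simp [unit]
  | some i :: w, d => by
    rw [mc_cons_some]
    have h1 : (fun u => unit m (some i :: u)) = (fun _ : Word m => (0:ℝ)) := by
      funext u; simp [unit]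
    rw [h1]
    have h2 : mc (fun _ : Word m => (0:ℝ)) d = fun _ => (0:ℝ) :=
      funext fun u => mc_zero_left d u
    rw [h2, sh_zero_right]
    simp [unit]

/-- `mc c e w` only depends on `e` at words shorter than `w`. -/
lemma mc_congr_right : ∀ (n : ℕ) (w : Word m), w.length ≤ n → ∀ (c : FPS m) (e e' : FPST m m),
    (∀ (j : Fin m) (u : Word m), u.length < w.length → e j u = e' j u) →
    mc c e w = mc c e' w
  | 0, w, hw, c, e, e', h => by
    have hnil : w = [] := List.length_eq_zero_iff.mp (Nat.le_zero.mp hw)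
    subst hnil
    rw [mc_nil, mc_nil]
  | n + 1, [], hw, c, e, e', h => by rw [mc_nil, mc_nil]
  | n + 1, none :: w, hw, c, e, e', h => by
    rw [mc_cons_none, mc_cons_none]
    exact mc_congr_right n w (by simp only [List.length_cons] at hw; omega) _ e e'
      (fun j u hu => h j u (by simp only [List.length_cons]; omega))
  | n + 1, some i :: w, hw, c, e, e', h => by
    rw [mc_cons_some, mc_cons_some]
    have hw' : w.length ≤ n := by simp only [List.length_cons] at hw; omega
    have step1 : sh (e i) (mc (fun u => c (some i :: u)) e) w
        = sh (e i) (mc (fun u => c (some i :: u)) e') w := by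
      apply sh_congr_right
      intro u hu
      exact mc_congr_right n u (by omega) _ e e'
        (fun j v hv => h j v (by simp only [List.length_cons]; omega))
    have step2 : sh (e i) (mc (fun u => c (some i :: u)) e') w
        = sh (e' i) (mc (fun u => c (some i :: u)) e') w := by
      apply sh_congr_left
      intro u hu
      exact h i u (by simp only [List.length_cons]; omega)
    rw [step1, step2]

/-- Mixed composition is a shuffle homomorphism in the left argument. -/
lemma mc_sh : ∀ (n : ℕ) (w : Word m), w.length ≤ n → ∀ (a b : FPS m) (d : FPST m m),
    mc (sh a b) d w = sh (mc a d) (mc b d) w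
  | n, [], _, a, b, d => by
    rw [mc_nil, sh_nil, sh_nil, mc_nil, mc_nil]
  | 0, x :: w, hw, a, b, d => by simp at hw
  | n + 1, none :: w, hw, a, b, d => by
    have hw' : w.length ≤ n := by simp only [List.length_cons] at hw; omega
    rw [mc_cons_none]
    have h1 : (fun u => sh a b (none :: u)) = fun u =>
        sh (fun v => a (none :: v)) b u + sh a (fun v => b (none :: v)) u :=
      funext fun u => sh_cons a b none u
    rw [h1, mc_add_left]
    rw [show mc (fun u => sh (fun v => a (none :: v)) b u) d w
        = mc (sh (fun v => a (none :: v)) b) d w from rfl]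
    rw [show mc (fun u => sh a (fun v => b (none :: v)) u) d w
        = mc (sh a (fun v => b (none :: v))) d w from rfl]
    rw [mc_sh n w hw', mc_sh n w hw']
    rw [sh_cons]
    have h2 : (fun u => mc a d (none :: u)) = mc (fun v => a (none :: v)) d :=
      funext fun u => mc_cons_none a d u
    have h3 : (fun u => mc b d (none :: u)) = mc (fun v => b (none :: v)) d :=
      funext fun u => mc_cons_none b d u
    rw [h2, h3]
  | n + 1, some i :: w, hw, a, b, d => by
    have hw' : w.length ≤ n := by simp only [List.length_cons] at hw; omega
    rw [mc_cons_some]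
    have h1 : mc (fun u => sh a b (some i :: u)) d = fun u =>
        mc (sh (fun v => a (some i :: v)) b) d u
          + mc (sh a (fun v => b (some i :: v))) d u := by
      funext u
      rw [← mc_add_left]
      exact congrArg (fun f => mc f d u) (funext fun v => sh_cons a b (some i) v)
    rw [h1, sh_add_right]
    have t1 : sh (d i) (mc (sh (fun v => a (some i :: v)) b) d) w
        = sh (sh (d i) (mc (fun v => a (some i :: v)) d)) (mc b d) w := by
      rw [sh_congr_right w (d i) _ (fun u => sh (mc (fun v => a (some i :: v)) d) (mc b d) u)
        (fun u hu => mc_sh u.length u le_rfl _ _ d)]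
      exact (sh_assoc w _ _ _).symm
    have t2 : sh (d i) (mc (sh a (fun v => b (some i :: v))) d) w
        = sh (mc a d) (sh (d i) (mc (fun v => b (some i :: v)) d)) w := by
      rw [sh_congr_right w (d i) _ (fun u => sh (mc a d) (mc (fun v => b (some i :: v)) d) u)
        (fun u hu => mc_sh u.length u le_rfl _ _ d)]
      exact sh_left_comm w _ _ _
    rw [t1, t2, sh_cons]
    have h2 : (fun u => mc a d (some i :: u))
        = sh (d i) (mc (fun v => a (some i :: v)) d) :=
      funext fun u => mc_cons_some a d i u
    have h3 : (fun u => mc b d (some i :: u))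
        = sh (d i) (mc (fun v => b (some i :: v)) d) :=
      funext fun u => mc_cons_some b d i u
    rw [h2, h3]

lemma mc_sh' (w : Word m) (a b : FPS m) (d : FPST m m) :
    mc (sh a b) d w = sh (mc a d) (mc b d) w :=
  mc_sh w.length w le_rfl a b d

/-- Composition law: `(c ⟲ d) ⟲ e = c ⟲ (d ⋆ e)`. -/
lemma mc_mc : ∀ (n : ℕ) (w : Word m), w.length ≤ n → ∀ (c : FPS m) (d e : FPST m m),
    mc (mc c d) e w = mc c (star d e) w
  | n, [], _, c, d, e => by rw [mc_nil, mc_nil, mc_nil]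
  | 0, x :: w, hw, c, d, e => by simp at hw
  | n + 1, none :: w, hw, c, d, e => by
    have hw' : w.length ≤ n := by simp only [List.length_cons] at hw; omega
    rw [mc_cons_none, mc_cons_none]
    have h1 : (fun u => mc c d (none :: u)) = mc (fun v => c (none :: v)) d :=
      funext fun u => mc_cons_none c d u
    rw [h1, mc_mc n w hw']
  | n + 1, some i :: w, hw, c, d, e => by
    have hw' : w.length ≤ n := by simp only [List.length_cons] at hw; omega
    rw [mc_cons_some, mc_cons_some]
    have h1 : (fun u => mc c d (some i :: u))
        = sh (d i) (mc (fun v => c (some i :: v)) d) :=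
      funext fun u => mc_cons_some c d i u
    rw [h1]
    have step1 : sh (e i) (mc (sh (d i) (mc (fun v => c (some i :: v)) d)) e) w
        = sh (e i) (fun u => sh (mc (d i) e)
            (mc (fun v => c (some i :: v)) (star d e)) u) w := by
      apply sh_congr_right
      intro u hu
      rw [mc_sh' u (d i) _ e]
      apply sh_congr_right
      intro v hv
      exact mc_mc n v (by omega) _ d e
    rw [step1]
    rw [show (fun u => sh (mc (d i) e) (mc (fun v => c (some i :: v)) (star d e)) u)
        = sh (mc (d i) e) (mc (fun v => c (some i :: v)) (star d e)) from rfl]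
    rw [← sh_assoc]
    rfl

lemma mc_mc' (w : Word m) (c : FPS m) (d e : FPST m m) :
    mc (mc c d) e w = mc c (star d e) w :=
  mc_mc w.length w le_rfl c d e

/-! ### Identity and associativity for `⋆` -/

lemma star_unit_right (d : FPST m m) : star d (unitT m m) = d := by
  funext i w
  show sh (unitT m m i) (mc (d i) (unitT m m)) w = d i w
  have h1 : unitT m m i = unit m := rfl
  rw [h1, sh_unit_left, mc_unitT]

lemma star_unit_left (d : FPST m m) : star (unitT m m) d = d := by
  funext i w
  show sh (d i) (mc (unitT m m i) d) w = d i w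
  have h1 : mc (unitT m m i) d = unit m := funext fun u => mc_unit_left u d
  rw [h1, sh_unit_right]

lemma star_assoc (c d e : FPST m m) : star (star c d) e = star c (star d e) := by
  funext i w
  show sh (e i) (mc (sh (d i) (mc (c i) d)) e) w
      = sh ((star d e) i) (mc (c i) (star d e)) w
  have h1 : mc (sh (d i) (mc (c i) d)) e
      = fun u => sh (mc (d i) e) (mc (mc (c i) d) e) u :=
    funext fun u => mc_sh' u _ _ e
  have h2 : (fun u => sh (mc (d i) e) (mc (mc (c i) d) e) u)
      = fun u => sh (mc (d i) e) (mc (c i) (star d e)) u := by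
    funext u
    apply sh_congr_right
    intro v _
    exact mc_mc' v (c i) d e
  rw [h1, h2]
  rw [show (fun u => sh (mc (d i) e) (mc (c i) (star d e)) u)
      = sh (mc (d i) e) (mc (c i) (star d e)) from rfl]
  rw [← sh_assoc]
  rfl

end CFS


namespace CFS

variable {m : ℕ}

/-! ### Shuffle inverse -/

lemma shInvAux_succ (c : FPS m) (n : ℕ) (w : Word m) :
    shInvAux c (n + 1) w = (c [])⁻¹ *
      (unit m w - sh (fun u => if u = [] then 0 else c u) (shInvAux c n) w) := rfl

lemma proper_vanish (c : FPS m) : ∀ u : Word m, u.length < 1 →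
    (fun u => if u = [] then 0 else c u) u = 0 := by
  intro u hu
  rcases u with _ | ⟨x, u⟩
  · simp
  · simp at hu

lemma shInvAux_stable (c : FPS m) : ∀ (n : ℕ) (w : Word m), w.length ≤ n →
    shInvAux c (n + 1) w = shInvAux c (n + 1 + 1) w
  | 0, w, hw => by
    have hnil : w = [] := List.length_eq_zero_iff.mp (Nat.le_zero.mp hw)
    subst hnil
    rw [shInvAux_succ c 0, shInvAux_succ c (0 + 1), sh_nil, sh_nil]
    simp
  | n + 1, w, hw => by
    rw [shInvAux_succ c (n + 1), shInvAux_succ c (n + 1 + 1)]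
    have h1 : sh (fun u => if u = [] then 0 else c u) (shInvAux c (n + 1)) w
        = sh (fun u => if u = [] then 0 else c u) (shInvAux c (n + 1 + 1)) w := by
      apply sh_congr w 1 _ _ _ (proper_vanish c)
      intro u hu
      exact shInvAux_stable c n u (by omega)
    rw [h1]

lemma shInvAux_add (c : FPS m) : ∀ (k n : ℕ) (w : Word m), w.length ≤ n →
    shInvAux c (n + 1) w = shInvAux c (n + 1 + k) w
  | 0, n, w, hw => rfl
  | k + 1, n, w, hw => by
    rw [shInvAux_add c k n w hw]
    rw [show n + 1 + k = n + k + 1 from by omega]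
    rw [show n + 1 + (k + 1) = n + k + 1 + 1 from by omega]
    exact shInvAux_stable c (n + k) w (by omega)

lemma shInv_eq_aux (c : FPS m) (n : ℕ) (w : Word m) (h : w.length ≤ n) :
    shInv c w = shInvAux c (n + 1) w := by
  have h2 := shInvAux_add c (n - w.length) w.length w le_rfl
  rw [show w.length + 1 + (n - w.length) = n + 1 from by omega] at h2
  exact h2

lemma shInv_fixed (c : FPS m) (w : Word m) :
    shInv c w = (c [])⁻¹ *
      (unit m w - sh (fun u => if u = [] then 0 else c u) (shInv c) w) := by
  rw [shInv_eq_aux c (w.length + 1) w (by omega), shInvAux_succ]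
  have h1 : sh (fun u => if u = [] then 0 else c u) (shInvAux c (w.length + 1)) w
      = sh (fun u => if u = [] then 0 else c u) (shInv c) w := by
    apply sh_congr w 1 _ _ _ (proper_vanish c)
    intro u hu
    exact (shInv_eq_aux c w.length u (by omega)).symm
  rw [h1]

lemma shInv_nil (c : FPS m) : shInv c [] = (c [])⁻¹ := by
  show shInvAux c (0 + 1) [] = (c [])⁻¹
  rw [shInvAux_succ, sh_nil]
  simp [unit, shInvAux]

lemma sh_shInv (c : FPS m) (h : c [] ≠ 0) (w : Word m) :
    sh c (shInv c) w = unit m w := by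
  have step : sh c (shInv c) w
      = sh (fun u => c [] * unit m u + (if u = [] then 0 else c u)) (shInv c) w := by
    apply sh_congr_left
    intro u _
    rcases u with _ | ⟨x, u⟩ <;> simp [unit]
  rw [step,
    sh_add_left w (fun u => c [] * unit m u) (fun u => if u = [] then 0 else c u) (shInv c),
    sh_smul_left w (c []) (unit m) (shInv c), sh_unit_left, shInv_fixed]
  rw [← mul_assoc, mul_inv_cancel₀ h, one_mul]
  ring

/-! ### Star inverse -/

lemma starInvAux_stable (d : FPST m m) : ∀ (n : ℕ) (w : Word m), w.length ≤ n → ∀ i,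
    starInvAux d (n + 1) i w = starInvAux d (n + 1 + 1) i w
  | 0, w, hw, i => by
    have hnil : w = [] := List.length_eq_zero_iff.mp (Nat.le_zero.mp hw)
    subst hnil
    show mc (shInvT d i) (starInvAux d 0) []
        = mc (shInvT d i) (starInvAux d (0 + 1)) []
    rw [mc_nil, mc_nil]
  | n + 1, w, hw, i => by
    show mc (shInvT d i) (starInvAux d (n + 1)) w
        = mc (shInvT d i) (starInvAux d (n + 1 + 1)) w
    apply mc_congr_right w.length w le_rfl
    intro j u hu
    exact starInvAux_stable d n u (by omega) j

lemma starInvAux_add (d : FPST m m) : ∀ (k n : ℕ) (w : Word m), w.length ≤ n → ∀ i,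
    starInvAux d (n + 1) i w = starInvAux d (n + 1 + k) i w
  | 0, n, w, hw, i => rfl
  | k + 1, n, w, hw, i => by
    rw [starInvAux_add d k n w hw i]
    rw [show n + 1 + k = n + k + 1 from by omega]
    rw [show n + 1 + (k + 1) = n + k + 1 + 1 from by omega]
    exact starInvAux_stable d (n + k) w (by omega) i

lemma starInv_eq_aux (d : FPST m m) (n : ℕ) (w : Word m) (h : w.length ≤ n) (i : Fin m) :
    starInv d i w = starInvAux d (n + 1) i w := by
  have h2 := starInvAux_add d (n - w.length) w.length w le_rfl i
  rw [show w.length + 1 + (n - w.length) = n + 1 from by omega] at h2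
  exact h2

lemma starInv_fixed (d : FPST m m) : starInv d = mcT (shInvT d) (starInv d) := by
  funext i w
  calc starInv d i w = starInvAux d (w.length + 1 + 1) i w :=
        starInv_eq_aux d (w.length + 1) w (by omega) i
    _ = mc (shInvT d i) (starInvAux d (w.length + 1)) w := rfl
    _ = mc (shInvT d i) (starInv d) w :=
        mc_congr_right w.length w le_rfl _ _ _
          (fun j u hu => (starInv_eq_aux d w.length u (by omega) j).symm)

lemma fixed_unique (d e e' : FPST m m) (he : e = mcT (shInvT d) e)
    (he' : e' = mcT (shInvT d) e') : e = e' := by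
  have happ : ∀ (i : Fin m) (w : Word m), e i w = mc (shInv (d i)) e w :=
    fun i w => congrFun (congrFun he i) w
  have happ' : ∀ (i : Fin m) (w : Word m), e' i w = mc (shInv (d i)) e' w :=
    fun i w => congrFun (congrFun he' i) w
  have key : ∀ (n : ℕ) (w : Word m), w.length ≤ n → ∀ i, e i w = e' i w := by
    intro n
    induction n with
    | zero =>
      intro w hw i
      have hnil : w = [] := List.length_eq_zero_iff.mp (Nat.le_zero.mp hw)
      subst hnil
      rw [happ, happ', mc_nil, mc_nil]
    | succ n ih =>
      intro w hw i
      rw [happ, happ']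
      exact mc_congr_right w.length w le_rfl _ _ _ (fun j u hu => ih u (by omega) j)
  funext i w
  exact key w.length w le_rfl i

lemma fixed_star_right (d e : FPST m m) (hd : PurelyImproper d)
    (he : e = mcT (shInvT d) e) : star d e = unitT m m := by
  funext i w
  show sh (e i) (mc (d i) e) w = unit m w
  have hei : e i = mc (shInv (d i)) e := congrFun he i
  rw [hei, sh_comm, ← mc_sh' w (d i) (shInv (d i)) e]
  have h1 : sh (d i) (shInv (d i)) = unit m := funext fun u => sh_shInv (d i) (hd i) u
  rw [h1, mc_unit_left]

lemma fixed_improper (d e : FPST m m) (hd : PurelyImproper d)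
    (he : e = mcT (shInvT d) e) : PurelyImproper e := by
  intro i
  have hei : e i [] = mc (shInv (d i)) e [] := congrFun (congrFun he i) []
  rw [hei, mc_nil, shInv_nil]
  exact inv_ne_zero (hd i)

lemma star_inv_unique (d e f : FPST m m) (h1 : star d e = unitT m m)
    (h2 : star f d = unitT m m) : f = e := by
  calc f = star f (unitT m m) := (star_unit_right f).symm
    _ = star f (star d e) := by rw [h1]
    _ = star (star f d) e := (star_assoc f d e).symm
    _ = star (unitT m m) e := by rw [h2]
    _ = e := star_unit_left e

lemma fixed_two_sided (d e : FPST m m) (hd : PurelyImproper d)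
    (he : e = mcT (shInvT d) e) :
    star d e = unitT m m ∧ star e d = unitT m m := by
  have h1 : star d e = unitT m m := fixed_star_right d e hd he
  have hePI : PurelyImproper e := fixed_improper d e hd he
  have hf : starInv e = mcT (shInvT e) (starInv e) := starInv_fixed e
  have h2 : star e (starInv e) = unitT m m := fixed_star_right e (starInv e) hePI hf
  have hd' : d = starInv e := by
    calc d = star d (unitT m m) := (star_unit_right d).symm
      _ = star d (star e (starInv e)) := by rw [h2]
      _ = star (star d e) (starInv e) := (star_assoc d e (starInv e)).symm
      _ = star (unitT m m) (starInv e) := by rw [h1]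
      _ = starInv e := star_unit_left _
  refine ⟨h1, ?_⟩
  rw [hd']
  exact h2

end CFS


open CFS in
/-- The purely improper tuples in `ℝ^m⟨⟨X⟩⟩` form a group under `⋆`
with identity `1l`: `⋆` preserves pure improperness, `1l` is purely improper and a
two-sided identity, `⋆` is associative, every purely improper `d` has a unique
two-sided `⋆`-inverse, and the two-sided `⋆`-inverses of `d` are exactly the
solutions of the fixed point equation `e = d^{⧢-1} ⟲ e`. -/
theorem star_group (m : ℕ) :
    (∀ c d : FPST m m, PurelyImproper c → PurelyImproper d →
      PurelyImproper (star c d)) ∧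
    PurelyImproper (unitT m m) ∧
    (∀ d : FPST m m, star d (unitT m m) = d ∧ star (unitT m m) d = d) ∧
    (∀ c d e : FPST m m, star (star c d) e = star c (star d e)) ∧
    (∀ d : FPST m m, PurelyImproper d →
      (∃! e : FPST m m, star d e = unitT m m ∧ star e d = unitT m m) ∧
      (∀ e : FPST m m,
        (star d e = unitT m m ∧ star e d = unitT m m) ↔ e = mcT (shInvT d) e)) := by
  refine ⟨?_, ?_, ?_, ?_, ?_⟩
  · intro c d hc hd i
    show sh (d i) (mc (c i) d) [] ≠ 0
    rw [sh_nil, mc_nil]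
    exact mul_ne_zero (hd i) (hc i)
  · intro i
    simp [unitT, unit]
  · intro d
    exact ⟨star_unit_right d, star_unit_left d⟩
  · exact fun c d e => star_assoc c d e
  · intro d hd
    have hfix := starInv_fixed d
    have hts := fixed_two_sided d (starInv d) hd hfix
    constructor
    · exact ⟨starInv d, hts, fun y hy => star_inv_unique d (starInv d) y hts.1 hy.2⟩
    · intro e
      constructor
      · rintro ⟨he1, he2⟩
        have heq : e = starInv d := star_inv_unique d (starInv d) e hts.1 he2
        rw [heq, ← hfix]
      · intro he
        exact fixed_two_sided d e hd he
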